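/- Let U ⊆ ℝⁿ be open and bounded, let f : closure(U) → ℝ be continuous and nonnegative, and set A = {x ∈ U : f(x) = 0}. If u and v are viscosity solutions of |Du| = f in U with zero Dirichlet boundary data and u = v on A, then u = v on U. -/

import Mathlib

open Filter Set Real

/-- A bounded uniformly continuous function `u` on `closure U` is a viscosity
subsolution of `|Du| = f` in `U` with zero Dirichlet boundary data if `u ≤ 0` on `∂U`
and whenever `φ` is continuously differentiable and `u - φ` attains a local maximum at
`x₀ ∈ U`, then `‖Dφ(x₀)‖ ≤ f(x₀)`. -/
def IsViscositySubsolutionEikonal (n : ℕ) (U : Set (EuclideanSpace ℝ (Fin n)))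
    (f u : EuclideanSpace ℝ (Fin n) → ℝ) : Prop :=
  (∀ x ∈ frontier U, u x ≤ 0) ∧
    ∀ φ : EuclideanSpace ℝ (Fin n) → ℝ, ContDiff ℝ 1 φ →
      ∀ x₀ ∈ U, IsLocalMax (fun x => u x - φ x) x₀ → ‖fderiv ℝ φ x₀‖ ≤ f x₀

/-- Viscosity supersolution of `|Du| = f` in `U` with zero Dirichlet boundary data. -/
def IsViscositySupersolutionEikonal (n : ℕ) (U : Set (EuclideanSpace ℝ (Fin n)))
    (f u : EuclideanSpace ℝ (Fin n) → ℝ) : Prop :=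
  (∀ x ∈ frontier U, 0 ≤ u x) ∧
    ∀ φ : EuclideanSpace ℝ (Fin n) → ℝ, ContDiff ℝ 1 φ →
      ∀ x₀ ∈ U, IsLocalMin (fun x => u x - φ x) x₀ → f x₀ ≤ ‖fderiv ℝ φ x₀‖

/-- Viscosity solution of `|Du| = f` in `U` with zero Dirichlet boundary data:
a bounded, uniformly continuous function on `closure U` that is both a viscosity
subsolution and a viscosity supersolution. -/
def IsViscositySolutionEikonal (n : ℕ) (U : Set (EuclideanSpace ℝ (Fin n)))
    (f u : EuclideanSpace ℝ (Fin n) → ℝ) : Prop :=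
  UniformContinuousOn u (closure U) ∧ Bornology.IsBounded (u '' closure U) ∧
    IsViscositySubsolutionEikonal n U f u ∧ IsViscositySupersolutionEikonal n U f u

/-!
If `u - v` had a positive maximum `M` on `closure U`, it would be attained only in `U`, since
both functions vanish on `∂U`, and `f` would be positive at every maximum point, since `u = v`
where `f = 0`; by compactness `f ≥ η > 0` wherever `u - v ≥ M - η`. For small `σ > 0`,
`(1 - σ) u` is a subsolution of `|Dw| = (1 - σ) f`. Maximizing
`(1 - σ) u x - v y - c ‖x - y‖ ^ 2` over pairs with `c` large gives nearby points `x, y` in that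
region, and testing both equations against the quadratic penalty yields
`f y ≤ 2 c ‖x - y‖ ≤ (1 - σ) f x`, which contradicts `|f x - f y| < σ η ≤ σ f x`.
-/

lemma hasFDerivAt_mul_norm_sub_sq {F : Type*} [NormedAddCommGroup F] [InnerProductSpace ℝ F]
    (c : ℝ) (a x : F) :
    HasFDerivAt (fun y => c * ‖y - a‖ ^ 2) (c • 2 • innerSL ℝ (x - a)) x := by
  simpa using (((hasFDerivAt_id x).sub_const a).norm_sq).const_mul c

lemma norm_fderiv_mul_norm_sub_sq {F : Type*} [NormedAddCommGroup F] [InnerProductSpace ℝ F]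
    (c : ℝ) (a x : F) :
    ‖fderiv ℝ (fun y => c * ‖y - a‖ ^ 2) x‖ = 2 * |c| * ‖x - a‖ := by
  rw [(hasFDerivAt_mul_norm_sub_sq c a x).fderiv, norm_smul, two_smul, ← two_smul ℝ, norm_smul,
    innerSL_apply_norm, Real.norm_eq_abs, Real.norm_two]
  ring

lemma contDiff_mul_norm_sub_sq {F : Type*} [NormedAddCommGroup F] [InnerProductSpace ℝ F]
    (c : ℝ) (a : F) : ContDiff ℝ 1 (fun y => c * ‖y - a‖ ^ 2) :=
  contDiff_const.mul ((contDiff_id.sub contDiff_const).norm_sq ℝ)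

lemma IsCompact.exists_pos_le_of_superlevel {X : Type*} [TopologicalSpace X] {K : Set X}
    (hK : IsCompact K) {f g : X → ℝ} (hf : ContinuousOn f K) (hg : ContinuousOn g K)
    (hf0 : ∀ x ∈ K, 0 ≤ f x) {M : ℝ} (hgM : ∀ x ∈ K, g x ≤ M)
    (hpos : ∀ x ∈ K, g x = M → 0 < f x) :
    ∃ η > 0, ∀ x ∈ K, M - η ≤ g x → η ≤ f x := by
  have hψ : ∀ x ∈ K, 0 < M - g x + f x := fun x hx => by
    rcases (hgM x hx).lt_or_eq with hlt | heq
    · linarith [hf0 x hx]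
    · linarith [hpos x hx heq]
  obtain ⟨ε, hε, hεψ⟩ := hK.exists_forall_le' (f := fun x => M - g x + f x)
    ((continuousOn_const.sub hg).add hf) hψ
  exact ⟨ε / 2, half_pos hε, fun x hx hgx => by linarith [hεψ x hx]⟩

lemma IsCompact.exists_forall_doubling_le {E : Type*} [NormedAddCommGroup E] {K : Set E}
    (hK : IsCompact K) (hne : K.Nonempty) {a b : E → ℝ} (ha : ContinuousOn a K)
    (hb : ContinuousOn b K) {d : ℝ} (hd : 0 < d) :
    ∃ c, ∃ x ∈ K, ∃ y ∈ K, ‖x - y‖ < d ∧ (∀ z ∈ K, a z - b z ≤ a x - b y) ∧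
      ∀ x' ∈ K, ∀ y' ∈ K, a x' - b y' - c * ‖x' - y'‖ ^ 2 ≤ a x - b y - c * ‖x - y‖ ^ 2 := by
  obtain ⟨A, hA⟩ := hK.exists_bound_of_continuousOn ha
  obtain ⟨B, hB⟩ := hK.exists_bound_of_continuousOn hb
  have habs : ∀ z ∈ K, |a z| ≤ |A| ∧ |b z| ≤ |B| := fun z hz =>
    ⟨(hA z hz).trans (le_abs_self A), (hB z hz).trans (le_abs_self B)⟩
  -- chosen so that `c * d ^ 2` exceeds the oscillation of `a x - b y` on `K ×ˢ K`
  set c := (2 * (|A| + |B|) + 1) / d ^ 2 with hc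
  have hΦ : ContinuousOn (fun p : E × E => a p.1 - b p.2 - c * ‖p.1 - p.2‖ ^ 2) (K ×ˢ K) :=
    ((ha.comp continuousOn_fst fun _ hp => hp.1).sub
      (hb.comp continuousOn_snd fun _ hp => hp.2)).sub (by fun_prop)
  obtain ⟨⟨x, y⟩, ⟨hx, hy⟩, hmax⟩ := (hK.prod hK).exists_isMaxOn (hne.prod hne) hΦ
  have hmax' : ∀ x' ∈ K, ∀ y' ∈ K,
      a x' - b y' - c * ‖x' - y'‖ ^ 2 ≤ a x - b y - c * ‖x - y‖ ^ 2 :=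
    fun x' hx' y' hy' => isMaxOn_iff.mp hmax (x', y') ⟨hx', hy'⟩
  have hdiag : ∀ z ∈ K, a z - b z ≤ a x - b y - c * ‖x - y‖ ^ 2 := fun z hz => by
    simpa using hmax' z hz z hz
  have hpen : 0 ≤ c * ‖x - y‖ ^ 2 := by positivity
  refine ⟨c, x, hx, y, hy, ?_, fun z hz => by linarith [hdiag z hz], hmax'⟩
  by_contra! hdxy
  obtain ⟨z, hz⟩ := hne
  have hcd : c * d ^ 2 = 2 * (|A| + |B|) + 1 := by rw [hc]; field_simp
  have hpen' : c * d ^ 2 ≤ c * ‖x - y‖ ^ 2 := by gcongr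
  obtain ⟨hax, hbx⟩ := habs x hx
  obtain ⟨hay, hby⟩ := habs y hy
  obtain ⟨haz, hbz⟩ := habs z hz
  linarith [hdiag z hz, le_abs_self (a x), neg_abs_le (b y), neg_abs_le (a z), le_abs_self (b z)]

lemma IsViscositySupersolutionEikonal.le_two_mul_norm {n : ℕ}
    {U : Set (EuclideanSpace ℝ (Fin n))} {f v : EuclideanSpace ℝ (Fin n) → ℝ}
    (hv : IsViscositySupersolutionEikonal n U f v) {c : ℝ}
    {a y₀ : EuclideanSpace ℝ (Fin n)} (hy₀ : y₀ ∈ U)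
    (hmin : IsLocalMin (fun y => v y - c * ‖y - a‖ ^ 2) y₀) :
    f y₀ ≤ 2 * |c| * ‖y₀ - a‖ := by
  simpa only [norm_fderiv_mul_norm_sub_sq] using
    hv.2 _ (contDiff_mul_norm_sub_sq c a) y₀ hy₀ hmin

namespace IsViscositySubsolutionEikonal

variable {n : ℕ} {U : Set (EuclideanSpace ℝ (Fin n))} {f g u v w : EuclideanSpace ℝ (Fin n) → ℝ}

lemma const_mul (hu : IsViscositySubsolutionEikonal n U f u) {θ : ℝ} (hθ : 0 < θ) :
    IsViscositySubsolutionEikonal n U (fun x => θ * f x) (fun x => θ * u x) := by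
  refine ⟨fun x hx => mul_nonpos_of_nonneg_of_nonpos hθ.le (hu.1 x hx), ?_⟩
  intro φ hφ x₀ hx₀ hmax
  have hmax' : IsLocalMax (fun x => u x - θ⁻¹ * φ x) x₀ := by
    convert hmax.comp_mono (monotone_mul_left_of_nonneg (inv_nonneg.2 hθ.le)) using 1
    ext x
    simp only [Function.comp_apply]
    field_simp
  have h := hu.2 _ (contDiff_const.mul hφ) x₀ hx₀ hmax'
  rw [fderiv_const_mul ((hφ.differentiable one_ne_zero) x₀), norm_smul, Real.norm_eq_abs,
    abs_of_pos (inv_pos.2 hθ), inv_mul_le_iff₀ hθ] at h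
  exact h

lemma two_mul_norm_le (hu : IsViscositySubsolutionEikonal n U f u) {c : ℝ}
    {a x₀ : EuclideanSpace ℝ (Fin n)} (hx₀ : x₀ ∈ U)
    (hmax : IsLocalMax (fun x => u x - c * ‖x - a‖ ^ 2) x₀) :
    2 * |c| * ‖x₀ - a‖ ≤ f x₀ := by
  simpa only [norm_fderiv_mul_norm_sub_sq] using
    hu.2 _ (contDiff_mul_norm_sub_sq c a) x₀ hx₀ hmax

lemma le_of_forall_doubling_le (hU : IsOpen U)
    (hw : IsViscositySubsolutionEikonal n U g w) (hv : IsViscositySupersolutionEikonal n U f v)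
    {c : ℝ} {x y : EuclideanSpace ℝ (Fin n)} (hx : x ∈ U) (hy : y ∈ U)
    (hmax : ∀ x' ∈ U, ∀ y' ∈ U,
      w x' - v y' - c * ‖x' - y'‖ ^ 2 ≤ w x - v y - c * ‖x - y‖ ^ 2) :
    f y ≤ g x := by
  have hsub : 2 * |c| * ‖x - y‖ ≤ g x := hw.two_mul_norm_le hx <| by
    filter_upwards [hU.mem_nhds hx] with x' hx'
    linarith [hmax x' hx' y hy]
  have hsuper : f y ≤ 2 * |-c| * ‖y - x‖ := hv.le_two_mul_norm hy <| by
    filter_upwards [hU.mem_nhds hy] with y' hy'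
    have := hmax x hx y' hy'
    rw [norm_sub_rev x y', norm_sub_rev x y] at this
    linarith
  rw [abs_neg, norm_sub_rev] at hsuper
  exact hsuper.trans hsub

lemma not_isMaxOn_sub (hU : IsOpen U) (hK : IsCompact (closure U))
    (hf : ContinuousOn f (closure U)) (hu : IsViscositySubsolutionEikonal n U f u)
    (hv : IsViscositySupersolutionEikonal n U f v) (huc : ContinuousOn u (closure U))
    (hvc : ContinuousOn v (closure U)) {z : EuclideanSpace ℝ (Fin n)} (hz : z ∈ closure U)
    {η : ℝ} (hη : 0 < η)
    (hnear : ∀ x ∈ closure U, u z - v z - η ≤ u x - v x → x ∈ U ∧ η ≤ f x) :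
    ¬ IsMaxOn (fun x => u x - v x) (closure U) z := by
  intro hzmax
  set K := closure U
  obtain ⟨C, hC⟩ := hK.exists_bound_of_continuousOn huc
  obtain ⟨σ, hσ0, hσ1, hσu⟩ : ∃ σ : ℝ, 0 < σ ∧ σ < 1 ∧ ∀ x ∈ K, |σ * u x| < η / 4 := by
    obtain ⟨σ, hσ0, hσC⟩ := exists_pos_mul_lt (by positivity : 0 < η / 4) |C|
    refine ⟨min σ (1 / 2), by positivity, by linarith [min_le_right σ (1 / 2)], fun x hx => ?_⟩
    rw [abs_mul, abs_of_pos (by positivity : 0 < min σ (1 / 2)), mul_comm]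
    calc |u x| * min σ (1 / 2) ≤ |C| * σ :=
          mul_le_mul ((hC x hx).trans (le_abs_self C)) (min_le_left _ _) (by positivity)
            (abs_nonneg C)
      _ < η / 4 := hσC
  have modulus : ∀ {h : EuclideanSpace ℝ (Fin n) → ℝ}, ContinuousOn h K → ∀ ε > 0,
      ∃ δ > 0, ∀ x ∈ K, ∀ y ∈ K, ‖x - y‖ < δ → |h x - h y| < ε := fun hh ε hε => by
    simpa [dist_eq_norm, Real.dist_eq] using
      Metric.uniformContinuousOn_iff.mp (hK.uniformContinuousOn_of_continuous hh) ε hε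
  obtain ⟨du, hdu, hmod_u⟩ := modulus huc (η / 4) (by positivity)
  obtain ⟨dv, hdv, hmod_v⟩ := modulus hvc (η / 4) (by positivity)
  obtain ⟨df, hdf, hmod_f⟩ := modulus hf (σ * η) (by positivity)
  obtain ⟨c, xs, hxs, ys, hys, hclose, hlow, hmax⟩ :=
    hK.exists_forall_doubling_le (a := fun x => (1 - σ) * u x) ⟨z, hz⟩
      (continuousOn_const.mul huc) hvc
      (lt_min hdu (lt_min hdv hdf) : 0 < min du (min dv df))
  have hclose' : ‖xs - ys‖ < du ∧ ‖xs - ys‖ < dv ∧ ‖xs - ys‖ < df := by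
    simp only [lt_min_iff] at hclose
    exact ⟨hclose.1, hclose.2.1, hclose.2.2⟩
  have hlow' := hlow z hz
  have hzmax' := isMaxOn_iff.mp hzmax
  obtain ⟨hxsU, hfxs⟩ := hnear xs hxs <| by
    linarith [abs_lt.mp (hσu z hz), abs_lt.mp (hσu xs hxs),
      abs_lt.mp (hmod_v xs hxs ys hys hclose'.2.1)]
  obtain ⟨hysU, -⟩ := hnear ys hys <| by
    linarith [abs_lt.mp (hσu z hz), abs_lt.mp (hσu xs hxs),
      abs_lt.mp (hmod_u xs hxs ys hys hclose'.1)]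
  have hdouble : f ys ≤ (1 - σ) * f xs :=
    (hu.const_mul (sub_pos.2 hσ1)).le_of_forall_doubling_le hU hv hxsU hysU
      fun x' hx' y' hy' => hmax x' (subset_closure hx') y' (subset_closure hy')
  have hσf : σ * η ≤ σ * f xs := mul_le_mul_of_nonneg_left hfxs hσ0.le
  linarith [abs_lt.mp (hmod_f xs hxs ys hys hclose'.2.2)]

end IsViscositySubsolutionEikonal

namespace IsViscositySolutionEikonal

variable {n : ℕ} {U : Set (EuclideanSpace ℝ (Fin n))} {f u v : EuclideanSpace ℝ (Fin n) → ℝ}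

lemma eq_zero_of_mem_frontier (hu : IsViscositySolutionEikonal n U f u)
    {x : EuclideanSpace ℝ (Fin n)} (hx : x ∈ frontier U) : u x = 0 :=
  le_antisymm (hu.2.2.1.1 x hx) (hu.2.2.2.1 x hx)

lemma le_of_eq_on_zeros (hUopen : IsOpen U) (hUbdd : Bornology.IsBounded U)
    (hf : ContinuousOn f (closure U)) (hf0 : ∀ x ∈ closure U, 0 ≤ f x)
    (hu : IsViscositySolutionEikonal n U f u) (hv : IsViscositySolutionEikonal n U f v)
    (hA : ∀ x ∈ U, f x = 0 → u x = v x) :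
    ∀ x ∈ U, u x ≤ v x := by
  by_contra! ⟨x₀, hx₀, hlt⟩
  have hK : IsCompact (closure U) := hUbdd.isCompact_closure
  have huc : ContinuousOn u (closure U) := hu.1.continuousOn
  have hvc : ContinuousOn v (closure U) := hv.1.continuousOn
  have hgc : ContinuousOn (fun x => u x - v x) (closure U) := huc.sub hvc
  obtain ⟨z, hz, hzmax⟩ := hK.exists_isMaxOn ⟨x₀, subset_closure hx₀⟩ hgc
  have hM : 0 < u z - v z := by linarith [isMaxOn_iff.mp hzmax x₀ (subset_closure hx₀)]
  have hmemU : ∀ x ∈ closure U, 0 < u x - v x → x ∈ U := fun x hx hpos => by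
    by_contra hxU
    have hxfr : x ∈ frontier U := hUopen.frontier_eq ▸ ⟨hx, hxU⟩
    rw [hu.eq_zero_of_mem_frontier hxfr, hv.eq_zero_of_mem_frontier hxfr, sub_zero] at hpos
    exact lt_irrefl _ hpos
  have hfpos : ∀ x ∈ closure U, u x - v x = u z - v z → 0 < f x := fun x hx hxz =>
    (hf0 x hx).lt_of_ne fun hfx => by
      have huv := hA x (hmemU x hx (hxz ▸ hM)) hfx.symm
      rw [huv, sub_self] at hxz
      exact hM.ne hxz
  obtain ⟨η, hη, hfη⟩ :=
    hK.exists_pos_le_of_superlevel hf hgc hf0 (isMaxOn_iff.mp hzmax) hfpos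
  refine hu.2.2.1.not_isMaxOn_sub hUopen hK hf hv.2.2.2 huc hvc hz (lt_min hη (half_pos hM))
    (fun x hx hx' => ⟨hmemU x hx ?_, (min_le_left _ _).trans (hfη x hx ?_)⟩) hzmax
  · linarith [min_le_right η ((u z - v z) / 2)]
  · linarith [min_le_left η ((u z - v z) / 2)]

end IsViscositySolutionEikonal

/-- let `U ⊆ ℝⁿ` be open and bounded, `f` continuous and nonnegative on
`closure U`, and `A = {x ∈ U : f x = 0}`. If `u` and `v` are viscosity solutions of
`|Du| = f` in `U` with zero Dirichlet boundary data and `u = v` on `A`, then `u = v`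
on `U`. -/
theorem eikonal_uniqueness_on_zero_set
    (n : ℕ) (U : Set (EuclideanSpace ℝ (Fin n)))
    (hUopen : IsOpen U) (hUbdd : Bornology.IsBounded U)
    (f : EuclideanSpace ℝ (Fin n) → ℝ)
    (hf : ContinuousOn f (closure U)) (hf0 : ∀ x ∈ closure U, 0 ≤ f x)
    (u v : EuclideanSpace ℝ (Fin n) → ℝ)
    (hu : IsViscositySolutionEikonal n U f u)
    (hv : IsViscositySolutionEikonal n U f v)
    (hA : ∀ x ∈ U, f x = 0 → u x = v x) :
    ∀ x ∈ U, u x = v x := fun x hx =>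
  le_antisymm (hu.le_of_eq_on_zeros hUopen hUbdd hf hf0 hv hA x hx)
    (hv.le_of_eq_on_zeros hUopen hUbdd hf hf0 hu (fun y hy h => (hA y hy h).symm) x hx)
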